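/- Let A be a Banach algebra with a bounded approximate identity and Φ : A → A a map (not assumed linear or bounded) satisfying Φ(ab) = Φ(a)b for all a, b ∈ A. Then Φ is automatically linear and bounded. -/

import Mathlib

open scoped InnerProductSpace RightActions
open Filter Topology

universe u v

/-- The right Hilbert C*-module class as it stood in the older Mathlib (right action of `Aᵐᵒᵖ`). -/
class RightCStarModule (A : Type u) (E : Type v) [NonUnitalSemiring A] [StarRing A]
    [Module ℂ A] [AddCommGroup E] [Module ℂ E] [PartialOrder A] [SMul Aᵐᵒᵖ E] [Norm A] [Norm E]
    extends Inner A E where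
  inner_add_right {x} {y} {z} : inner x (y + z) = inner x y + inner x z
  inner_self_nonneg {x} : 0 ≤ inner x x
  inner_self {x} : inner x x = 0 ↔ x = 0
  inner_op_smul_right {a : A} {x y : E} : inner x (y <• a) = inner x y * a
  inner_smul_right_complex {z : ℂ} {x} {y} : inner x (z • y) = z • inner x y
  star_inner x y : star (inner x y) = inner y x
  norm_eq_sqrt_norm_inner_self x : ‖x‖ = √‖inner x x‖

section Defs

variable (A : Type*) (E : Type*) [NonUnitalCStarAlgebra A] [PartialOrder A] [StarOrderedRing A]
  [NormedAddCommGroup E] [NormedSpace ℂ E] [SMul Aᵐᵒᵖ E] [RightCStarModule A E]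

/-- An operator on a Hilbert C*-module is *adjointable* if it admits an adjoint with respect to
the `A`-valued inner product. -/
def Adjointable (T : E →L[ℂ] E) : Prop :=
  ∃ S : E →L[ℂ] E, ∀ x y : E, ⟪T x, y⟫_A = ⟪x, S y⟫_A

/-- `EJ A E J` is the closed linear span `E(J)` of `{ξ • a : ξ ∈ E, a ∈ J}`. -/
noncomputable def EJ (J : Set A) : Submodule ℂ E :=
  (Submodule.span ℂ {y : E | ∃ ξ : E, ∃ a ∈ J, y = ξ <• a}).topologicalClosure

/-- `JM A E M` is the closed linear span `J(M)` of `{⟪η, m⟫ : η ∈ E, m ∈ M}`. -/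
noncomputable def JM (M : Set E) : Submodule ℂ A :=
  (Submodule.span ℂ {a : A | ∃ η : E, ∃ m ∈ M, a = ⟪η, m⟫_A}).topologicalClosure

/-- `BS A E` is the C*-algebra `B`, the closure of the linear span of all inner products. -/
noncomputable def BS : Set A :=
  closure (Submodule.span ℂ {a : A | ∃ η ξ : E, a = ⟪η, ξ⟫_A} : Set A)

/-- `KE A E` is `K(E)`, the closed (non-unital) algebra generated by the rank-one operators
`θ_{η,ξ} : x ↦ η • ⟪ξ, x⟫`. -/
noncomputable def KE : NonUnitalSubalgebra ℂ (E →L[ℂ] E) :=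
  (NonUnitalAlgebra.adjoin ℂ
    {T : E →L[ℂ] E | ∃ η ξ : E, ∀ x : E, T x = η <• ⟪ξ, x⟫_A}).topologicalClosure

end Defs

/-!
The heart of the proof is Cohen's factorization: every null sequence `x` in `B` factors as
`x m = z * y m` with `y` null. Let the `ℓ¹`-unitization `U` of `B` act on `B` from the left and
put `d₀ = 1`, `d (n+1) = d n - γ (1 - γ)ⁿ (1 - e i_n)`. The `d n` are units converging
geometrically to some `ζ` whose scalar part `lim (1 - γ)ⁿ` vanishes, so `ζ = z ∈ B`; choosing
`e i_n` to be almost a left unit on the null sequence `d n⁻¹ • x` makes `d n⁻¹ • x m` converge,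
uniformly in `m`, to a null sequence `y`, and then `x m = ζ • y m = z * y m`.

For a centralizer `Φ`, a common factor `a = z a'`, `b = z b'` gives
`Φ (a + b) = Φ z * (a' + b') = Φ a + Φ b`, likewise for scalars, and factoring a null sequence
gives `Φ (x m) = Φ z * y m → 0`; so `Φ` is a continuous linear map.
-/

lemma Units.val_inv_sub_val_inv {R : Type*} [Ring R] (a b : Rˣ) :
    (↑a⁻¹ - ↑b⁻¹ : R) = ↑a⁻¹ * (↑b - ↑a) * ↑b⁻¹ := by
  rw [mul_sub, sub_mul, Units.inv_mul, one_mul, mul_assoc, Units.mul_inv, mul_one]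

lemma Units.exists_val_eq_sub_norm_inv_le {R : Type*} [NormedRing R] [HasSummableGeomSeries R]
    [NormOneClass R] (d : Rˣ) {h : R} (hh : ‖h * ↑d⁻¹‖ < 1) :
    ∃ d' : Rˣ, (d' : R) = d - h ∧ ‖(↑d'⁻¹ : R)‖ ≤ ‖(↑d⁻¹ : R)‖ * (1 - ‖h * ↑d⁻¹‖)⁻¹ := by
  refine ⟨Units.oneSub _ hh * d, by simp [sub_mul, mul_assoc], ?_⟩
  rw [mul_inv_rev, Units.val_mul]
  refine (norm_mul_le _ _).trans (mul_le_mul_of_nonneg_left ?_ (norm_nonneg _))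
  have := tsum_geometric_le_of_norm_lt_one _ hh
  rwa [norm_one, sub_self, zero_add] at this

lemma exists_seq_of_forall_exists {α : Type*} {P : ℕ → α → Prop} {R : ℕ → α → α → Prop}
    {a : α} (ha : P 0 a) (h : ∀ n x, P n x → ∃ y, P (n + 1) y ∧ R n x y) :
    ∃ f : ℕ → α, ∀ n, P n (f n) ∧ R n (f n) (f (n + 1)) := by
  choose g hg using h
  let F : (n : ℕ) → {x // P n x} := fun n ↦
    Nat.rec ⟨a, ha⟩ (fun n x ↦ ⟨g n x.1 x.2, (hg n x.1 x.2).1⟩) n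
  exact ⟨fun n ↦ (F n).1, fun n ↦ ⟨(F n).2, (hg n _ _).2⟩⟩

lemma exists_tendstoUniformly_of_dist_le_geometric_two {β α : Type*} [PseudoMetricSpace α]
    [CompleteSpace α] {F : ℕ → β → α} {C : ℝ}
    (hF : ∀ n x, dist (F n x) (F (n + 1) x) ≤ C / 2 / 2 ^ n) :
    ∃ f : β → α, TendstoUniformly F f atTop := by
  choose f hf using fun x ↦ cauchySeq_tendsto_of_complete (cauchySeq_of_le_geometric_two (hF · x))
  refine ⟨f, Metric.tendstoUniformly_iff.2 fun ε hε ↦ ?_⟩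
  have hC : Tendsto (fun n : ℕ ↦ C / 2 ^ n) atTop (𝓝 0) := by
    simpa using tendsto_const_nhds.div_atTop (tendsto_pow_atTop_atTop_of_one_lt one_lt_two)
  filter_upwards [hC.eventually (gt_mem_nhds hε)] with n hn x
  rw [dist_comm]
  exact (dist_le_of_le_geometric_two_of_tendsto (hF · x) (hf x) n).trans_lt hn

section UnitizationAction

open WithLp

variable {𝕜 B : Type*} [NormedField 𝕜] [NonUnitalNormedRing B] [NormedSpace 𝕜 B]

local notation "𝒰" => WithLp 1 (Unitization 𝕜 B)

noncomputable instance : SMul 𝒰 B where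
  smul u b := (ofLp u * (b : Unitization 𝕜 B)).snd

lemma toLp_inr_injective : Function.Injective fun b : B ↦ toLp 1 (b : Unitization 𝕜 B) :=
  unitization_isometry_inr.injective

lemma smul_eq_snd_mul {u : 𝒰} (hu : (ofLp u).fst = 0) (b : B) : u • b = (ofLp u).snd * b := by
  show (ofLp u * (b : Unitization 𝕜 B)).snd = _
  simp [Unitization.snd_mul, hu]

variable [IsScalarTower 𝕜 B B] [SMulCommClass 𝕜 B B]

lemma toLp_inr_smul (u : 𝒰) (b : B) :
    toLp 1 ((u • b : B) : Unitization 𝕜 B) = u * toLp 1 (b : Unitization 𝕜 B) := by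
  refine ofLp_injective 1 (Unitization.ext ?_ rfl)
  simp

noncomputable instance : Module 𝒰 B :=
  toLp_inr_injective.module 𝒰
    (AddMonoidHom.mk' (fun b : B ↦ toLp 1 (b : Unitization 𝕜 B)) fun _ _ ↦ by simp)
    toLp_inr_smul

instance : IsScalarTower 𝕜 𝒰 B where
  smul_assoc c u b := toLp_inr_injective <| by
    beta_reduce
    rw [toLp_inr_smul, Unitization.inr_smul, toLp_smul, toLp_inr_smul, smul_mul_assoc]

instance : IsBoundedSMul 𝒰 B := .of_norm_smul_le fun (u : 𝒰) (b : B) ↦ by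
  rw [← unitization_norm_inr (𝕜 := 𝕜), toLp_inr_smul, ← unitization_norm_inr (𝕜 := 𝕜) b]
  exact norm_mul_le _ _

lemma toLp_inr_smul_eq_mul (a b : B) : toLp 1 (a : Unitization 𝕜 B) • b = a * b :=
  toLp_inr_injective <| by
    beta_reduce
    rw [toLp_inr_smul, Unitization.inr_mul]
    rfl

lemma one_sub_inr_smul (a b : B) : (1 - toLp 1 (a : Unitization 𝕜 B)) • b = b - a * b := by
  rw [sub_smul, one_smul, toLp_inr_smul_eq_mul]

lemma fst_ofLp_sub_smul_one_sub_inr (u : 𝒰) (c : 𝕜) (a : B) :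
    (ofLp (u - c • (1 - toLp 1 (a : Unitization 𝕜 B)))).fst = (ofLp u).fst - c := by
  change (ofLp u).fst - c * (1 - 0) = _
  ring

instance : NormOneClass 𝒰 where
  norm_one := by
    rw [unitization_norm_def]
    change ‖(1 : Unitization 𝕜 B).fst‖ + ‖(1 : Unitization 𝕜 B).snd‖ = 1
    simp

lemma norm_fst_ofLp_le (u : 𝒰) : ‖(ofLp u).fst‖ ≤ ‖u‖ := by
  rw [unitization_norm_def]
  exact le_add_of_nonneg_right (norm_nonneg _)

lemma continuous_fst_ofLp : Continuous fun u : 𝒰 ↦ (ofLp u).fst :=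
  AddMonoidHomClass.continuous_of_bound (AddMonoidHom.mk' (fun u : 𝒰 ↦ (ofLp u).fst) fun _ _ ↦ rfl)
    1 fun u ↦ by rw [one_mul]; exact norm_fst_ofLp_le u

lemma norm_one_sub_inr_le (a : B) : ‖1 - toLp 1 (a : Unitization 𝕜 B)‖ ≤ 1 + ‖a‖ :=
  (norm_sub_le _ _).trans_eq (by rw [norm_one, unitization_norm_inr])

lemma fst_ofLp_inv (d : 𝒰ˣ) : (ofLp (↑d⁻¹ : 𝒰)).fst = (ofLp (d : 𝒰)).fst⁻¹ :=
  eq_inv_of_mul_eq_one_right <| by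
    rw [← Unitization.fst_mul, ← unitization_mul, d.mul_inv]
    rfl

lemma norm_one_sub_inr_mul_le (a : B) (u : 𝒰) :
    ‖(1 - toLp 1 (a : Unitization 𝕜 B)) * u‖ ≤
      ‖(ofLp u).fst‖ * (1 + ‖a‖) + ‖(ofLp u).snd - a * (ofLp u).snd‖ := by
  have hmul : ofLp ((1 - toLp 1 (a : Unitization 𝕜 B)) * u) = ofLp u - a * ofLp u := by
    change (1 - (a : Unitization 𝕜 B)) * ofLp u = _
    rw [sub_mul, one_mul]
  rw [unitization_norm_def, hmul]
  simp only [sub_eq_add_neg, Unitization.fst_add, Unitization.snd_add, Unitization.fst_neg,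
    Unitization.snd_neg, Unitization.fst_mul, Unitization.snd_mul, Unitization.fst_inr,
    Unitization.snd_inr, zero_mul, neg_zero, add_zero, zero_smul, zero_add]
  set f := (ofLp u).fst
  set b := (ofLp u).snd
  rw [show b + -(f • a + a * b) = b + -(a * b) - f • a by abel]
  have := norm_sub_le (b + -(a * b)) (f • a)
  rw [norm_smul] at this
  linarith

end UnitizationAction

lemma tendstoUniformly_mul_of_tendsto_zero {B ι : Type*} [NonUnitalSeminormedRing B]
    {l : Filter ι} {e : ι → B} {C : ℝ} (he_bdd : ∀ i, ‖e i‖ ≤ C)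
    (he : ∀ a, Tendsto (fun i ↦ e i * a) l (𝓝 a)) {w : ℕ → B} (hw : Tendsto w atTop (𝓝 0)) :
    TendstoUniformly (fun i m ↦ e i * w m) w l := by
  refine Metric.tendstoUniformly_iff.2 fun ε hε ↦ ?_
  obtain ⟨N, hN⟩ := eventually_atTop.1 <|
    (tendsto_norm_zero.comp hw).eventually (gt_mem_nhds (by positivity : 0 < ε / (|C| + 1)))
  have hnear : ∀ᶠ i in l, ∀ m ∈ Set.Iio N, dist (w m) (e i * w m) < ε :=
    (eventually_all_finite (Set.finite_Iio N)).2 fun m _ ↦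
      (he (w m)).eventually (Metric.ball_mem_nhds (w m) hε) |>.mono fun _ h ↦ by rwa [dist_comm]
  filter_upwards [hnear] with i hi m
  obtain hm | hm := lt_or_ge m N
  · exact hi m hm
  · have hwm : ‖w m‖ * (|C| + 1) < ε := (lt_div_iff₀ (by positivity)).1 (hN m hm)
    calc dist (w m) (e i * w m) = ‖e i * w m - w m‖ := by rw [dist_comm, dist_eq_norm]
      _ ≤ ‖e i‖ * ‖w m‖ + ‖w m‖ := (norm_sub_le _ _).trans (by gcongr; exact norm_mul_le _ _)
      _ ≤ ‖w m‖ * (|C| + 1) := by nlinarith [norm_nonneg (w m), he_bdd i, le_abs_self C]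
      _ < ε := hwm

def HasNullSequenceFactorization (B : Type*) [Mul B] [Zero B] [TopologicalSpace B] : Prop :=
  ∀ x : ℕ → B, Tendsto x atTop (𝓝 0) →
    ∃ z : B, ∃ y : ℕ → B, Tendsto y atTop (𝓝 0) ∧ ∀ m, x m = z * y m

section CohenFactorization

open WithLp

variable {𝕜 B ι : Type*} [RCLike 𝕜] [NonUnitalNormedRing B] [NormedSpace 𝕜 B]
  [IsScalarTower 𝕜 B B] [SMulCommClass 𝕜 B B]
  {l : Filter ι} {e : ι → B} {C : ℝ}

local notation "𝒰" => WithLp 1 (Unitization 𝕜 B)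

lemma norm_smul_one_sub_inr_mul_inv_le (d : 𝒰ˣ) {σ : ℝ} (hσ : 0 < σ)
    (hd : (ofLp (d : 𝒰)).fst = σ) {c : ℝ} (hc : 0 ≤ c) {a : B}
    (ha : dist (a * (ofLp (↑d⁻¹ : 𝒰)).snd) (ofLp (↑d⁻¹ : 𝒰)).snd ≤ 1) :
    ‖((c * σ : ℝ) : 𝕜) • (1 - toLp 1 (a : Unitization 𝕜 B)) * ↑d⁻¹‖ ≤ c * (1 + ‖a‖) + c * σ := by
  rw [smul_mul_assoc, norm_smul, RCLike.norm_ofReal, abs_of_nonneg (by positivity)]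
  calc c * σ * ‖(1 - toLp 1 (a : Unitization 𝕜 B)) * ↑d⁻¹‖ ≤ c * σ * (σ⁻¹ * (1 + ‖a‖) + 1) := by
        gcongr
        refine (norm_one_sub_inr_mul_le _ _).trans ?_
        rw [fst_ofLp_inv, hd, norm_inv, RCLike.norm_ofReal, abs_of_pos hσ, norm_sub_rev,
          ← dist_eq_norm]
        gcongr
    _ = c * (1 + ‖a‖) + c * σ := by field_simp

lemma exists_cohen_step [CompleteSpace B] (he_bdd : ∀ i, ‖e i‖ ≤ C) (hC : 0 ≤ C)
    (he : ∀ a, Tendsto (fun i ↦ e i * a) l (𝓝 a)) [l.NeBot] {x : ℕ → B}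
    (hx : Tendsto x atTop (𝓝 0)) {γ : ℝ} (hγ : 0 < γ) (hγC : γ * (C + 1) ≤ 1 / 4)
    (d : 𝒰ˣ) {σ : ℝ} (hσ : 0 < σ) (hσ1 : σ ≤ 1) (hd : (ofLp (d : 𝒰)).fst = σ)
    {δ : ℝ} (hδ : 0 < δ) :
    ∃ d' : 𝒰ˣ, (ofLp (d' : 𝒰)).fst = ((1 - γ) * σ : ℝ) ∧ ‖(d' : 𝒰) - d‖ ≤ γ * (C + 1) * σ ∧
      ∀ m, ‖(↑d'⁻¹ : 𝒰) • x m - (↑d⁻¹ : 𝒰) • x m‖ ≤ δ := by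
  set v := (ofLp (↑d⁻¹ : 𝒰)).snd
  have hw : Tendsto (fun m ↦ (↑d⁻¹ : 𝒰) • x m) atTop (𝓝 0) := by
    simpa using hx.const_smul (↑d⁻¹ : 𝒰)
  -- `ε` may be fixed in advance because making `e i` almost fix the `B`-part `v` of `d⁻¹`
  -- already forces `‖d'⁻¹‖ ≤ 2 ‖d⁻¹‖`.
  set ε := δ / (2 * ‖(↑d⁻¹ : 𝒰)‖ + 1)
  obtain ⟨i, hiw, hiv⟩ := ((Metric.tendstoUniformly_iff.1
    (tendstoUniformly_mul_of_tendsto_zero he_bdd he hw) ε (by positivity)).and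
    ((he v).eventually (Metric.closedBall_mem_nhds v one_pos))).exists
  set h : 𝒰 := ((γ * σ : ℝ) : 𝕜) • (1 - toLp 1 (e i : Unitization 𝕜 B))
  have hγσ : ‖((γ * σ : ℝ) : 𝕜)‖ = γ * σ := by
    rw [RCLike.norm_ofReal, abs_of_pos (by positivity)]
  have hq : ‖h * ↑d⁻¹‖ ≤ 1 / 2 :=
    (norm_smul_one_sub_inr_mul_inv_le d hσ hd hγ.le hiv).trans (by nlinarith [he_bdd i])
  obtain ⟨d', hd'd, hd'inv⟩ := d.exists_val_eq_sub_norm_inv_le (hq.trans_lt (by norm_num))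
  refine ⟨d', ?_, ?_, fun m ↦ ?_⟩
  · rw [hd'd, fst_ofLp_sub_smul_one_sub_inr, hd]
    push_cast
    ring
  · rw [hd'd, sub_sub_cancel_left, norm_neg, norm_smul, hγσ]
    calc γ * σ * ‖1 - toLp 1 (e i : Unitization 𝕜 B)‖ ≤ γ * σ * (1 + C) := by
          gcongr
          exact (norm_one_sub_inr_le _).trans (by linarith [he_bdd i])
      _ = γ * (C + 1) * σ := by ring
  · rw [← sub_smul, Units.val_inv_sub_val_inv, hd'd, sub_sub_cancel, mul_smul, mul_smul]
    set w := (↑d⁻¹ : 𝒰) • x m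
    have hhw : h • w = ((γ * σ : ℝ) : 𝕜) • (w - e i * w) := by
      rw [smul_assoc, one_sub_inr_smul]
    have hinv : ‖(↑d'⁻¹ : 𝒰)‖ ≤ ‖(↑d⁻¹ : 𝒰)‖ * 2 := by
      refine hd'inv.trans (mul_le_mul_of_nonneg_left ?_ (norm_nonneg _))
      rw [inv_le_comm₀ (by linarith) (by norm_num)]
      linarith
    have hε : ε * (2 * ‖(↑d⁻¹ : 𝒰)‖ + 1) = δ := div_mul_cancel₀ _ (by positivity)
    have hwε : ‖w - e i * w‖ ≤ ε := by
      rw [← dist_eq_norm]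
      exact (hiw m).le
    calc ‖(↑d'⁻¹ : 𝒰) • h • w‖ ≤ ‖(↑d'⁻¹ : 𝒰)‖ * (γ * σ * ‖w - e i * w‖) := by
          rw [hhw]
          refine (norm_smul_le _ _).trans_eq ?_
          rw [norm_smul, hγσ]
      _ ≤ ‖(↑d⁻¹ : 𝒰)‖ * 2 * (1 * ε) := by
          gcongr
          nlinarith
      _ ≤ δ := by nlinarith [norm_nonneg (↑d⁻¹ : 𝒰)]

lemma exists_cohen_seq [CompleteSpace B] (he_bdd : ∀ i, ‖e i‖ ≤ C) (hC : 0 ≤ C)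
    (he : ∀ a, Tendsto (fun i ↦ e i * a) l (𝓝 a)) [l.NeBot] {x : ℕ → B}
    (hx : Tendsto x atTop (𝓝 0)) {γ : ℝ} (hγ : 0 < γ) (hγC : γ * (C + 1) ≤ 1 / 4) :
    ∃ d : ℕ → 𝒰ˣ, ∀ n, (ofLp (d n : 𝒰)).fst = ((1 - γ) ^ n : ℝ) ∧
      ‖(d (n + 1) : 𝒰) - d n‖ ≤ γ * (C + 1) * (1 - γ) ^ n ∧
      ∀ m, ‖(↑(d (n + 1))⁻¹ : 𝒰) • x m - (↑(d n)⁻¹ : 𝒰) • x m‖ ≤ 1 / 2 / 2 ^ n := by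
  have hγ1 : γ < 1 := by nlinarith
  refine exists_seq_of_forall_exists
    (P := fun n (d : 𝒰ˣ) ↦ (ofLp (d : 𝒰)).fst = ((1 - γ) ^ n : ℝ))
    (R := fun n (d d' : 𝒰ˣ) ↦ ‖(d' : 𝒰) - d‖ ≤ γ * (C + 1) * (1 - γ) ^ n ∧
      ∀ m, ‖(↑d'⁻¹ : 𝒰) • x m - (↑d⁻¹ : 𝒰) • x m‖ ≤ 1 / 2 / 2 ^ n)
    (a := 1) (by rw [pow_zero, RCLike.ofReal_one]; rfl)
    fun n d hd ↦ ?_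
  obtain ⟨d', h₁, h₂, h₃⟩ := exists_cohen_step he_bdd hC he hx hγ hγC d
    (pow_pos (by linarith) n) (pow_le_one₀ (by linarith) (by linarith)) hd
    (δ := 1 / 2 / 2 ^ n) (by positivity)
  exact ⟨d', by rw [h₁, pow_succ'], h₂, h₃⟩

end CohenFactorization

open WithLp in
theorem hasNullSequenceFactorization (𝕜 : Type*) {B ι : Type*} [RCLike 𝕜]
    [NonUnitalNormedRing B] [NormedSpace 𝕜 B] [IsScalarTower 𝕜 B B] [SMulCommClass 𝕜 B B]
    [CompleteSpace B] {l : Filter ι} {e : ι → B} {C : ℝ} (he_bdd : ∀ i, ‖e i‖ ≤ C)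
    (he : ∀ a, Tendsto (fun i ↦ e i * a) l (𝓝 a)) [l.NeBot] : HasNullSequenceFactorization B := by
  intro x hx
  obtain ⟨i⟩ := l.nonempty_of_neBot
  have hC : 0 ≤ C := (norm_nonneg _).trans (he_bdd i)
  set γ : ℝ := (4 * (C + 1))⁻¹
  have hγ : 0 < γ := by positivity
  have hγC : γ * (C + 1) ≤ 1 / 4 := by
    rw [inv_mul_le_iff₀ (by positivity)]
    linarith
  have hγ1 : γ < 1 := by nlinarith
  obtain ⟨d, hd⟩ := exists_cohen_seq (𝕜 := 𝕜) he_bdd hC he hx hγ hγC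
  obtain ⟨ζ, hζ⟩ := cauchySeq_tendsto_of_complete <|
    cauchySeq_of_le_geometric (f := fun n ↦ (d n : WithLp 1 (Unitization 𝕜 B))) (1 - γ)
      (γ * (C + 1)) (by linarith) fun n ↦ by
      rw [dist_comm, dist_eq_norm]
      exact (hd n).2.1
  obtain ⟨y, hy⟩ := exists_tendstoUniformly_of_dist_le_geometric_two (C := 1)
    (F := fun n m ↦ (↑(d n)⁻¹ : WithLp 1 (Unitization 𝕜 B)) • x m) fun n m ↦ by
      rw [dist_comm, dist_eq_norm]
      exact (hd n).2.2 m
  have hpow : Tendsto (fun n ↦ (((1 - γ) ^ n : ℝ) : 𝕜)) atTop (𝓝 0) := by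
    simpa only [Function.comp_def, RCLike.ofReal_zero] using
      ((RCLike.continuous_ofReal (K := 𝕜)).tendsto 0).comp
        (tendsto_pow_atTop_nhds_zero_of_lt_one (by linarith) (by linarith : 1 - γ < 1))
  have hζ0 : (ofLp ζ).fst = 0 :=
    tendsto_nhds_unique ((continuous_fst_ofLp.tendsto ζ).comp hζ)
      (hpow.congr fun n ↦ ((hd n).1).symm)
  have hy0 : Tendsto y atTop (𝓝 0) := hy.tendsto_of_eventually_tendsto
    (.of_forall fun n ↦ by simpa using hx.const_smul (↑(d n)⁻¹ : WithLp 1 (Unitization 𝕜 B)))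
    tendsto_const_nhds
  refine ⟨(ofLp ζ).snd, y, hy0, fun m ↦ ?_⟩
  rw [← smul_eq_snd_mul hζ0]
  have := hζ.smul (hy.tendsto_at m)
  simp only [smul_smul, Units.mul_inv, one_smul] at this
  exact tendsto_nhds_unique tendsto_const_nhds this

lemma HasNullSequenceFactorization.exists_mul_eq_mul_eq {B : Type*} [MulZeroClass B]
    [TopologicalSpace B] (hB : HasNullSequenceFactorization B) (a b : B) :
    ∃ z a' b' : B, a = z * a' ∧ b = z * b' := by
  obtain ⟨z, y, -, hy⟩ := hB (fun m ↦ [a, b].getD m 0) <| tendsto_const_nhds.congr' <|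
    eventually_atTop.2 ⟨2, fun m hm ↦ (List.getD_eq_default _ _ (by simpa using hm)).symm⟩
  exact ⟨z, y 0, y 1, hy 0, hy 1⟩

lemma HasNullSequenceFactorization.tendsto_zero_of_map_mul {B : Type*} [MulZeroClass B]
    [TopologicalSpace B] [FrechetUrysohnSpace B] [ContinuousMul B]
    (hB : HasNullSequenceFactorization B) {Φ : B → B} (hΦ : ∀ a b, Φ (a * b) = Φ a * b) :
    Tendsto Φ (𝓝 0) (𝓝 0) := by
  refine tendsto_nhds_iff_seq_tendsto.2 fun x hx ↦ ?_
  obtain ⟨z, y, hy, hxy⟩ := hB x hx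
  simpa [Function.comp_def, hxy, hΦ] using (tendsto_const_nhds (x := Φ z)).mul hy

variable {A E : Type*} [NonUnitalCStarAlgebra A] [PartialOrder A] [StarOrderedRing A]
  [NormedAddCommGroup E] [NormedSpace ℂ E] [SMul Aᵐᵒᵖ E] [RightCStarModule A E]

theorem centralizer_automatic_continuity_general {B' : Type*} [NonUnitalNormedRing B'] [CompleteSpace B']
    [NormedSpace ℂ B'] [IsScalarTower ℂ B' B'] [SMulCommClass ℂ B' B']
    {ι : Type*} [SemilatticeSup ι] [Nonempty ι] (e : ι → B') (C : ℝ)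
    (he_bdd : ∀ i, ‖e i‖ ≤ C)
    (he_left : ∀ a : B', Tendsto (fun i => e i * a) atTop (𝓝 a))
    (Φ : B' → B') (hΦ : ∀ a b : B', Φ (a * b) = Φ a * b) :
    (∀ a b : B', Φ (a + b) = Φ a + Φ b) ∧
    (∀ (c : ℂ) (a : B'), Φ (c • a) = c • Φ a) ∧
    (∃ K : ℝ, ∀ a : B', ‖Φ a‖ ≤ K * ‖a‖) := by
  have hB := hasNullSequenceFactorization ℂ he_bdd he_left
  have hadd (a b : B') : Φ (a + b) = Φ a + Φ b := by
    obtain ⟨z, a', b', rfl, rfl⟩ := hB.exists_mul_eq_mul_eq a b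
    rw [← mul_add, hΦ, hΦ, hΦ, mul_add]
  have hsmul (c : ℂ) (a : B') : Φ (c • a) = c • Φ a := by
    obtain ⟨z, a', -, rfl, -⟩ := hB.exists_mul_eq_mul_eq a a
    rw [← mul_smul_comm, hΦ, hΦ, mul_smul_comm]
  let f : B' →ₗ[ℂ] B' := ⟨⟨Φ, hadd⟩, hsmul⟩
  have hf : Continuous f := continuous_of_continuousAt_zero f <| by
    rw [ContinuousAt, map_zero]
    exact hB.tendsto_zero_of_map_mul hΦ
  exact ⟨hadd, hsmul, ‖(⟨f, hf⟩ : B' →L[ℂ] B')‖, (⟨f, hf⟩ : B' →L[ℂ] B').le_opNorm⟩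

/-- On a Banach algebra with a bounded (two-sided) approximate identity, any map `Φ` satisfying
the centralizer identity `Φ(ab) = Φ(a)b` is automatically linear and bounded. -/
theorem centralizer_automatic_continuity {B' : Type*} [NonUnitalNormedRing B'] [CompleteSpace B']
    [NormedSpace ℂ B'] [IsScalarTower ℂ B' B'] [SMulCommClass ℂ B' B']
    {ι : Type*} [SemilatticeSup ι] [Nonempty ι] (e : ι → B') (C : ℝ)
    (he_bdd : ∀ i, ‖e i‖ ≤ C)
    (he_left : ∀ a : B', Tendsto (fun i => e i * a) atTop (𝓝 a))
    (he_right : ∀ a : B', Tendsto (fun i => a * e i) atTop (𝓝 a))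
    (Φ : B' → B') (hΦ : ∀ a b : B', Φ (a * b) = Φ a * b) :
    (∀ a b : B', Φ (a + b) = Φ a + Φ b) ∧
    (∀ (c : ℂ) (a : B'), Φ (c • a) = c • Φ a) ∧
    (∃ K : ℝ, ∀ a : B', ‖Φ a‖ ≤ K * ‖a‖) :=
  centralizer_automatic_continuity_general e C he_bdd he_left Φ hΦ
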